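/- arXiv:2302.10141 — 6 statements merged into one kernel-verified Lean document; each statement's English description precedes it below -/
import Mathlib

section
/- Let s̄ satisfy the G₀-conditions. Then the graph G₀(s̄) is acyclic: there is no finite cycle x₀, x₁, …, x_{k-1}, x₀ with k ≥ 3, all x_i distinct, and consecutive vertices adjacent in G₀(s̄). -/
/-!
An edge of `G₀(s̄)` at level `n` flips coordinate `n` of a point extending `s n`. In a cycle,
let `N` be the highest level used. Coordinate `N` must be flipped at least twice, so there are
two level-`N` edges `xᵢ → xᵢ₊₁` and `xⱼ → xⱼ₊₁` with only lower levels in between. Both `xᵢ`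
and `xⱼ` extend `s N`, and the intermediate edges leave every coordinate `≥ N` alone, so
`xᵢ₊₁ = xⱼ`. Distinctness then forces `j = i + 1`, whence `xᵢ = xᵢ₊₂`, which is impossible
in a cycle of length at least `3`.
-/

open Set

abbrev Cantor : Type := ℕ → Bool

/-- Prepend a finite binary sequence to an element of Cantor space. -/
def catSeq (t : List Bool) (x : Cantor) : Cantor :=
  fun n => if h : n < t.length then t.get ⟨n, h⟩ else x (n - t.length)

/-- The basic clopen set `[t]` of extensions of `t`. -/
def cylinder (t : List Bool) : Set Cantor :=
  {x | ∀ i : ℕ, ∀ h : i < t.length, x i = t.get ⟨i, h⟩}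

/-- The (symmetric) edge relation of the graph `G₀(s̄)`. -/
def G0Adj (s : ℕ → List Bool) (x y : Cantor) : Prop :=
  ∃ n : ℕ, ∃ z : Cantor,
    (x = catSeq (s n ++ [false]) z ∧ y = catSeq (s n ++ [true]) z) ∨
    (x = catSeq (s n ++ [true]) z ∧ y = catSeq (s n ++ [false]) z)

def flipAt (n : ℕ) (x : Cantor) : Cantor :=
  Function.update x n (!x n)

lemma flipAt_apply_of_ne {n m : ℕ} (x : Cantor) (h : m ≠ n) : flipAt n x m = x m :=
  Function.update_of_ne h _ _

lemma flipAt_flipAt (n : ℕ) (x : Cantor) : flipAt n (flipAt n x) = x := by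
  simp [flipAt]

lemma catSeq_append_singleton_length (t : List Bool) (b : Bool) (z : Cantor) :
    catSeq (t ++ [b]) z t.length = b := by
  have h : t.length < (t ++ [b]).length := by simp
  simp only [catSeq, dif_pos h, List.get_eq_getElem]
  exact List.getElem_concat_length rfl h

lemma catSeq_append_singleton_of_lt (t : List Bool) (b : Bool) (z : Cantor) {m : ℕ}
    (hm : m < t.length) : catSeq (t ++ [b]) z m = t[m] := by
  simp [catSeq, Nat.lt_succ_of_lt hm, List.getElem_append_left hm]

lemma catSeq_append_singleton_of_gt (t : List Bool) (b : Bool) (z : Cantor) {m : ℕ}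
    (hm : t.length < m) : catSeq (t ++ [b]) z m = z (m - (t.length + 1)) := by
  simp only [catSeq, List.length_append, List.length_singleton]
  rw [dif_neg (by omega)]

lemma catSeq_append_not (t : List Bool) (b : Bool) (z : Cantor) :
    catSeq (t ++ [!b]) z = flipAt t.length (catSeq (t ++ [b]) z) := by
  funext m
  rcases lt_trichotomy m t.length with hm | rfl | hm
  · rw [flipAt_apply_of_ne _ hm.ne, catSeq_append_singleton_of_lt _ _ _ hm,
      catSeq_append_singleton_of_lt _ _ _ hm]
  · simp [flipAt, catSeq_append_singleton_length]
  · rw [flipAt_apply_of_ne _ hm.ne', catSeq_append_singleton_of_gt _ _ _ hm,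
      catSeq_append_singleton_of_gt _ _ _ hm]

lemma catSeq_append_mem_cylinder (t u : List Bool) (z : Cantor) :
    catSeq (t ++ u) z ∈ cylinder t := by
  intro i hi
  simp [catSeq, Nat.lt_add_right _ hi, List.getElem_append_left hi]

lemma eq_of_mem_cylinder {t : List Bool} {x y : Cantor} (hx : x ∈ cylinder t)
    (hy : y ∈ cylinder t) {m : ℕ} (hm : m < t.length) : x m = y m :=
  (hx m hm).trans (hy m hm).symm

lemma G0Adj.exists_flipAt {s : ℕ → List Bool} (hlen : ∀ n, (s n).length = n) {x y : Cantor}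
    (h : G0Adj s x y) : ∃ n, y = flipAt n x ∧ x ∈ cylinder (s n) := by
  obtain ⟨n, z, ⟨rfl, rfl⟩ | ⟨rfl, rfl⟩⟩ := h
  all_goals refine ⟨n, ?_, catSeq_append_mem_cylinder _ _ _⟩
  · simpa [hlen] using catSeq_append_not (s n) false z
  · simpa [hlen] using catSeq_append_not (s n) true z

section FlipWalk

variable {x : ℕ → Cantor} {lev : ℕ → ℕ} {k : ℕ}

lemma apply_eq_of_forall_lev_ne (hstep : ∀ i < k, x (i + 1) = flipAt (lev i) (x i))
    {a b m : ℕ} (hab : a ≤ b) (hbk : b ≤ k) (hm : ∀ t, a ≤ t → t < b → lev t ≠ m) :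
    x a m = x b m := by
  induction b, hab using Nat.le_induction with
  | base => rfl
  | succ b hab ih =>
    rw [ih (by omega) fun t h1 h2 => hm t h1 (by omega), hstep b (by omega),
      flipAt_apply_of_ne _ (hm b hab (by omega)).symm]

lemma exists_ne_lev_eq_of_closed (hstep : ∀ i < k, x (i + 1) = flipAt (lev i) (x i))
    (hclosed : x k = x 0) {i : ℕ} (hi : i < k) : ∃ j < k, j ≠ i ∧ lev j = lev i := by
  by_contra! honce
  have hbefore : x 0 (lev i) = x i (lev i) :=
    apply_eq_of_forall_lev_ne hstep (Nat.zero_le i) hi.le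
      fun t _ ht => honce t (by omega) ht.ne
  have hafter : x (i + 1) (lev i) = x k (lev i) :=
    apply_eq_of_forall_lev_ne hstep hi le_rfl fun t ht htk => honce t htk (by omega)
  rw [hclosed, hbefore, hstep i hi] at hafter
  simp [flipAt] at hafter

lemma exists_consecutive_lev_eq (hstep : ∀ i < k, x (i + 1) = flipAt (lev i) (x i))
    (hclosed : x k = x 0) {i₀ : ℕ} (hi₀ : i₀ < k) :
    ∃ i j, i < j ∧ j < k ∧ lev i = lev i₀ ∧ lev j = lev i₀ ∧
      ∀ t, i < t → t < j → lev t ≠ lev i₀ := by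
  have hex : ∃ i, i < k ∧ lev i = lev i₀ := ⟨i₀, hi₀, rfl⟩
  obtain ⟨hik, hi⟩ := Nat.find_spec hex
  have hex' : ∃ j, Nat.find hex < j ∧ j < k ∧ lev j = lev i₀ := by
    obtain ⟨j, hjk, hji, hj⟩ := exists_ne_lev_eq_of_closed hstep hclosed hik
    have : ¬ j < Nat.find hex := fun h => Nat.find_min hex h ⟨hjk, hj.trans hi⟩
    exact ⟨j, by omega, hjk, hj.trans hi⟩
  obtain ⟨hij, hjk, hj⟩ := Nat.find_spec hex'
  exact ⟨_, _, hij, hjk, hi, hj, fun t h1 h2 ht => Nat.find_min hex' h2 ⟨h1, by omega, ht⟩⟩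

lemma apply_succ_eq_of_forall_lev_lt (hstep : ∀ i < k, x (i + 1) = flipAt (lev i) (x i))
    {i j : ℕ} (hij : i < j) (hjk : j ≤ k) (hbelow : ∀ m < lev i, x i m = x j m)
    (hmid : ∀ t, i < t → t < j → lev t < lev i) : x (i + 1) = x j := by
  funext m
  rcases lt_or_ge m (lev i) with hm | hm
  · rw [hstep i (by omega), flipAt_apply_of_ne _ hm.ne, hbelow m hm]
  · exact apply_eq_of_forall_lev_ne hstep hij hjk fun t h1 h2 => by
      have := hmid t h1 h2
      omega

end FlipWalk

lemma eq_or_eq_zero_of_apply_eq {α : Type*} {x : ℕ → α} {k : ℕ}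
    (hinj : ∀ i j, i < j → j < k → x i ≠ x j) (hclosed : x k = x 0) {i j : ℕ} (hij : i ≤ j)
    (hjk : j ≤ k) (h : x i = x j) : i = j ∨ (i = 0 ∧ j = k) := by
  rcases hij.eq_or_lt with rfl | hij
  · exact .inl rfl
  rcases hjk.lt_or_eq with hjk | rfl
  · exact absurd h (hinj i j hij hjk)
  rcases Nat.eq_zero_or_pos i with rfl | hi
  · exact .inr ⟨rfl, rfl⟩
  · exact absurd (h.trans hclosed).symm (hinj 0 i hi (by omega))

theorem G0_acyclic_general (s : ℕ → List Bool) (hlen : ∀ n, (s n).length = n) :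
    ¬ ∃ (k : ℕ) (x : ℕ → Cantor), 3 ≤ k ∧
        (∀ i j, i < j → j < k → x i ≠ x j) ∧ x k = x 0 ∧
        (∀ i < k, G0Adj s (x i) (x (i + 1))) := by
  rintro ⟨k, x, hk, hinj, hclosed, hadj⟩
  choose! lev hstep hcyl using fun i hi => (hadj i hi).exists_flipAt hlen
  obtain ⟨i₀, hi₀, hmax⟩ := Finset.exists_max_image (Finset.range k) lev ⟨0, by simp; omega⟩
  rw [Finset.mem_range] at hi₀
  obtain ⟨i, j, hij, hjk, hi, hj, hmid⟩ := exists_consecutive_lev_eq hstep hclosed hi₀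
  have hsucc : x (i + 1) = x j := by
    refine apply_succ_eq_of_forall_lev_lt hstep hij hjk.le (fun m hm => ?_) fun t h1 h2 => ?_
    · have hcylj := hcyl j hjk
      rw [hj, ← hi] at hcylj
      exact eq_of_mem_cylinder (hcyl i (by omega)) hcylj (by rwa [hlen])
    · exact hi ▸ (hmax t (Finset.mem_range.2 (by omega))).lt_of_ne (hmid t h1 h2)
  have hji : j = i + 1 := by
    have := eq_or_eq_zero_of_apply_eq hinj hclosed (by omega) hjk.le hsucc
    omega
  have hback : x i = x (i + 2) := by
    rw [hstep (i + 1) (by omega), hstep i (by omega), ← hji, hj, hi, flipAt_flipAt]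
  have := eq_or_eq_zero_of_apply_eq hinj hclosed (by omega) (by omega) hback
  omega

/-- the graph `G₀(s̄)` is acyclic: there is no cycle
`x₀, x₁, …, x_{k-1}, x₀` with `k ≥ 3`, all vertices distinct, and consecutive
vertices adjacent. -/
theorem G0_acyclic (s : ℕ → List Bool) (hlen : ∀ n, (s n).length = n)
    (hdense : Dense (⋃ n, cylinder (s n))) :
    ¬ ∃ (k : ℕ) (x : ℕ → Cantor), 3 ≤ k ∧
        (∀ i j, i < j → j < k → x i ≠ x j) ∧ x k = x 0 ∧
        (∀ i < k, G0Adj s (x i) (x (i + 1))) :=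
  G0_acyclic_general s hlen
end

section
/- Every uncountable Borel subset of a Polish space is the union of 𝔡-many compact sets, where 𝔡 is the dominating number. -/
/-!
A Borel subset of a Polish space is analytic, so it is empty or a continuous image of the Baire
space `ℕ → ℕ`; it therefore suffices to cover `ℕ → ℕ` by `𝔡` compact sets. Fix a dominating
family `D` of size `𝔡`. Every `f` is eventually below some `g ∈ D`, hence everywhere below
`g + k` for a constant `k`, and the order interval `Iic (g + k)` is compact by Tychonoff.
Since `D` is infinite, the pairs `(g, k)` are still only `𝔡` many.
-/

open Set

/-- The dominating number `𝔡`: least cardinality of a dominating family in `ω^ω`. -/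
noncomputable def domNumber : Cardinal :=
  sInf {c : Cardinal |
    ∃ D : Set (ℕ → ℕ),
      (∀ f : ℕ → ℕ, ∃ g ∈ D, ∀ᶠ n in Filter.atTop, f n ≤ g n) ∧ c = Cardinal.mk D}

open Filter MeasureTheory
open scoped Cardinal

def IsDominating (D : Set (ℕ → ℕ)) : Prop :=
  ∀ f : ℕ → ℕ, ∃ g ∈ D, ∀ᶠ n in atTop, f n ≤ g n

theorem exists_isDominating_mk_eq_domNumber : ∃ D, IsDominating D ∧ #D = domNumber := by
  obtain ⟨D, hD, hcard⟩ : domNumber ∈ {c : Cardinal | ∃ D, IsDominating D ∧ c = #D} :=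
    csInf_mem ⟨_, univ, fun f => ⟨f, mem_univ f, Eventually.of_forall fun _ => le_rfl⟩, rfl⟩
  exact ⟨D, hD, hcard.symm⟩

theorem IsDominating.aleph0_le_mk {D : Set (ℕ → ℕ)} (hD : IsDominating D) : ℵ₀ ≤ #D := by
  by_contra! hlt
  have hfin : D.Finite := Cardinal.lt_aleph0_iff_set_finite.mp hlt
  -- a function strictly above the pointwise maximum of the finitely many members of `D`
  obtain ⟨g, hg, hev⟩ := hD fun n => (hfin.toFinset.sup fun g => g n) + 1
  obtain ⟨n, hn⟩ := hev.exists
  have hle : g n ≤ hfin.toFinset.sup fun g => g n :=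
    Finset.le_sup (f := fun g => g n) (hfin.mem_toFinset.mpr hg)
  omega

theorem IsDominating.exists_le_add_const {D : Set (ℕ → ℕ)} (hD : IsDominating D)
    (f : ℕ → ℕ) : ∃ g ∈ D, ∃ k : ℕ, f ≤ g + fun _ => k := by
  obtain ⟨g, hg, hev⟩ := hD f
  obtain ⟨N, hN⟩ := eventually_atTop.mp hev
  refine ⟨g, hg, (Finset.range N).sup f, fun n => ?_⟩
  show f n ≤ g n + (Finset.range N).sup f
  rcases lt_or_ge n N with hn | hn
  · exact le_add_left (Finset.le_sup (Finset.mem_range.mpr hn))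
  · exact le_add_right (hN n hn)

theorem isCompact_Iic_of_orderBot {α : Type*} [Preorder α] [OrderBot α] [TopologicalSpace α]
    [CompactIccSpace α] (b : α) : IsCompact (Iic b) :=
  Icc_bot (a := b) ▸ isCompact_Icc

theorem exists_isCompact_iUnion_eq_univ_card_le_domNumber :
    ∃ (ι : Type) (K : ι → Set (ℕ → ℕ)),
      #ι ≤ domNumber ∧ (∀ i, IsCompact (K i)) ∧ ⋃ i, K i = univ := by
  obtain ⟨D, hD, hcard⟩ := exists_isDominating_mk_eq_domNumber
  refine ⟨D × ℕ, fun p => Iic (p.1.1 + fun _ => p.2), ?_, fun p => ?_, ?_⟩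
  · rw [Cardinal.mk_prod, Cardinal.lift_id, Cardinal.lift_id, Cardinal.mk_nat,
      Cardinal.mul_aleph0_eq hD.aleph0_le_mk, hcard]
  · exact isCompact_Iic_of_orderBot _
  · refine eq_univ_of_forall fun f => ?_
    obtain ⟨g, hg, k, hle⟩ := hD.exists_le_add_const f
    exact mem_iUnion.mpr ⟨(⟨g, hg⟩, k), hle⟩

theorem MeasureTheory.AnalyticSet.exists_isCompact_iUnion_eq_card_le_domNumber {X : Type*}
    [TopologicalSpace X] {s : Set X} (hs : AnalyticSet s) :
    ∃ (ι : Type) (K : ι → Set X),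
      #ι ≤ domNumber ∧ (∀ i, IsCompact (K i)) ∧ ⋃ i, K i = s := by
  rw [AnalyticSet] at hs
  rcases hs with rfl | ⟨f, hf, rfl⟩
  · exact ⟨Empty, fun _ => ∅, by simp, fun _ => isCompact_empty, iUnion_of_empty _⟩
  obtain ⟨ι, K, hcard, hK, hcover⟩ := exists_isCompact_iUnion_eq_univ_card_le_domNumber
  refine ⟨ι, fun i => f '' K i, hcard, fun i => (hK i).image hf, ?_⟩
  rw [← image_iUnion, hcover, image_univ]

theorem borel_eq_union_domNumber_compacts_general (X : Type) [TopologicalSpace X] [PolishSpace X]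
    [MeasurableSpace X] [BorelSpace X] (B : Set X) (hB : MeasurableSet B) :
    ∃ (ι : Type) (K : ι → Set X),
      Cardinal.mk ι ≤ domNumber ∧ (∀ i, IsCompact (K i)) ∧ (⋃ i, K i) = B :=
  hB.analyticSet.exists_isCompact_iUnion_eq_card_le_domNumber

/-- every uncountable Borel subset of a Polish space is the union of
`𝔡`-many compact sets. -/
theorem borel_eq_union_domNumber_compacts (X : Type) [TopologicalSpace X] [PolishSpace X]
    [MeasurableSpace X] [BorelSpace X] (B : Set X) (hB : MeasurableSet B)
    (hunc : ¬ B.Countable) :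
    ∃ (ι : Type) (K : ι → Set X),
      Cardinal.mk ι ≤ domNumber ∧ (∀ i, IsCompact (K i)) ∧ (⋃ i, K i) = B :=
  borel_eq_union_domNumber_compacts_general X B hB
end

section
/- Any countable support product of ℵ₁-sized partial orders over an index set of arbitrary size has the ℵ₂-chain condition, assuming CH. Precisely: assume CH; let ⟨P_α : α < κ⟩ be partial orders each of cardinality at most ℵ₁, and let Q be the set of functions f with domain κ, f(α) ∈ P_α, and f(α) = 1_{P_α} for all but countably many α, ordered coordinatewise. Then Q has no antichain of size ℵ₂. -/
/-!
Under CH we have `ℵ₁ ^ ℵ₀ = ℵ₁`, and this is all that is needed besides the regularity of `ω₁`.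
Two conditions that agree on the intersection of their supports are compatible, so it suffices
to find such a pair in any set `A` of more than `ℵ₁` countably supported functions (a weak form
of the Δ-system lemma). Build an increasing `ω₁`-chain of subsets of `A`, each of size `ℵ₁`:
stage `o` contains, for each earlier stage `Y` and each trace that an element of `A` leaves on
the coordinates supporting `Y`, one element of `A` with that trace; there are only
`ℵ₁ ^ ℵ₀ = ℵ₁` such traces. Take `g ∈ A` outside the union `U` of the chain. Since `ω₁` is
regular, the countable set of coordinates where the support of `g` meets those of `U` is already
covered by the supports of one stage `Y`, and the representative `f ∈ U` of the trace of `g` on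
`Y` agrees with `g` on `supp f ∩ supp g`.
-/

open Cardinal Ordinal Set Function

universe u

namespace CountableSupport

theorem mk_sigma_le {ι : Type u} {P : ι → Type u} {κ : Cardinal.{u}} (hκ : ℵ₀ ≤ κ)
    (hι : #ι ≤ κ) (hP : ∀ i, #(P i) ≤ κ) : #(Σ i, P i) ≤ κ :=
  calc #(Σ i, P i) ≤ #ι * ⨆ i, #(P i) := (mk_sigma P).trans_le (sum_le_mk_mul_iSup _)
    _ ≤ κ * κ := mul_le_mul' hι (ciSup_le' hP)
    _ = κ := mul_eq_self hκ

theorem mk_countable_subsets_le {β : Type u} {κ : Cardinal.{u}} (hκ : ℵ₀ ≤ κ)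
    (hκ₀ : κ ^ ℵ₀ = κ) (hβ : #β ≤ κ) : #{t : Set β // #t ≤ ℵ₀} ≤ κ :=
  calc #{t : Set β // #t ≤ ℵ₀} ≤ max #β ℵ₀ ^ ℵ₀ := mk_bounded_set_le β ℵ₀
    _ ≤ κ ^ ℵ₀ := power_le_power_right (max_le hβ hκ)
    _ = κ := hκ₀

theorem exists_lt_omega_one_subset {β : Type u} {S : Ordinal.{u} → Set β} (hS : Monotone S)
    {t : Set β} (ht : t.Countable) (htS : t ⊆ ⋃ o < ω₁, S o) : ∃ o < ω₁, t ⊆ S o := by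
  have hmem : ∀ x : t, ∃ o < ω₁, (x : β) ∈ S o := fun x => by simpa using htS x.2
  choose o ho hxo using hmem
  have : Countable t := ht.to_subtype
  exact ⟨⨆ x, o x, iSup_lt_omega_one ho, fun x hx =>
    hS (Ordinal.le_iSup o ⟨x, hx⟩) (hxo ⟨x, hx⟩)⟩

section TransfiniteIterate

variable {α : Type u} (F : Set α → Set α)

noncomputable def transfiniteIterate (o : Ordinal.{u}) : Set α :=
  ⋃ o' < o, F (transfiniteIterate o')
termination_by o

variable {F}

theorem transfiniteIterate_eq (o : Ordinal.{u}) :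
    transfiniteIterate F o = ⋃ o' < o, F (transfiniteIterate F o') := by
  rw [transfiniteIterate]

theorem apply_transfiniteIterate_subset {o o' : Ordinal.{u}} (h : o' < o) :
    F (transfiniteIterate F o') ⊆ transfiniteIterate F o := by
  rw [transfiniteIterate_eq o]
  exact subset_biUnion_of_mem (u := fun o' => F (transfiniteIterate F o')) h

theorem transfiniteIterate_mono : Monotone (transfiniteIterate F) := by
  intro o₁ o₂ h
  rw [transfiniteIterate_eq o₁, transfiniteIterate_eq o₂]
  exact biUnion_subset_biUnion_left fun _ h' => lt_of_lt_of_le h' h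

theorem transfiniteIterate_subset {A : Set α} (hFA : ∀ Y, F Y ⊆ A) (o : Ordinal.{u}) :
    transfiniteIterate F o ⊆ A := by
  rw [transfiniteIterate_eq]
  exact iUnion₂_subset fun _ _ => hFA _

theorem exists_lt_of_mem_transfiniteIterate {o : Ordinal.{u}} (ho : Order.IsSuccLimit o)
    {x : α} (hx : x ∈ transfiniteIterate F o) : ∃ o' < o, x ∈ transfiniteIterate F o' := by
  rw [transfiniteIterate_eq] at hx
  obtain ⟨o', ho', hxo'⟩ := mem_iUnion₂.1 hx
  exact ⟨o' + 1, ho.add_one_lt ho', apply_transfiniteIterate_subset (lt_add_one o') hxo'⟩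

theorem mk_transfiniteIterate_le {A : Set α} {κ : Cardinal.{u}} (hκ : ℵ₀ ≤ κ)
    (hFA : ∀ Y, F Y ⊆ A) (hF : ∀ Y ⊆ A, #Y ≤ κ → #(F Y) ≤ κ) {o : Ordinal.{u}}
    (ho : o.card ≤ κ) : #(transfiniteIterate F o) ≤ κ := by
  induction o using WellFoundedLT.induction with
  | _ o ih =>
    rw [transfiniteIterate_eq]
    exact mk_biUnion_le_of_le ho hκ _ fun o' h' =>
      hF _ (transfiniteIterate_subset hFA o') (ih o' h' ((card_le_card h'.le).trans ho))

end TransfiniteIterate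

section Supports

variable {ι : Type u} {P : ι → Type u} (x₀ : ∀ i, P i)

def supp (f : ∀ i, P i) : Set ι := {i | f i ≠ x₀ i}

def suppUnion (Y : Set (∀ i, P i)) : Set ι := ⋃ f ∈ Y, supp x₀ f

/-- Encoded as a set of pairs, the trace of a countably supported function is countable, so a
set `S` of size `κ` carries at most `κ ^ ℵ₀` traces. -/
def traceOn (S : Set ι) (f : ∀ i, P i) : Set (Σ i : S, P i) :=
  {p | f p.1 = p.2 ∧ p.2 ≠ x₀ p.1}

noncomputable def representatives (A Y : Set (∀ i, P i)) : Set (∀ i, P i) :=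
  haveI : Nonempty (∀ i, P i) := ⟨x₀⟩
  invFunOn (traceOn x₀ (suppUnion x₀ Y)) A '' (traceOn x₀ (suppUnion x₀ Y) '' A)

theorem representatives_subset (A Y : Set (∀ i, P i)) : representatives x₀ A Y ⊆ A :=
  haveI : Nonempty (∀ i, P i) := ⟨x₀⟩
  invFunOn_image_image_subset _ _

theorem exists_mem_representatives_traceOn_eq {A : Set (∀ i, P i)} {g : ∀ i, P i}
    (hg : g ∈ A) (Y : Set (∀ i, P i)) :
    ∃ f ∈ representatives x₀ A Y,
      traceOn x₀ (suppUnion x₀ Y) f = traceOn x₀ (suppUnion x₀ Y) g :=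
  haveI : Nonempty (∀ i, P i) := ⟨x₀⟩
  ⟨_, mem_image_of_mem _ (mem_image_of_mem _ hg), invFunOn_apply_eq hg⟩

variable {x₀}

theorem suppUnion_mono : Monotone (suppUnion x₀) := fun _ _ h =>
  biUnion_subset_biUnion_left h

theorem supp_subset_suppUnion {Y : Set (∀ i, P i)} {f : ∀ i, P i} (hf : f ∈ Y) :
    supp x₀ f ⊆ suppUnion x₀ Y :=
  subset_biUnion_of_mem hf

theorem suppUnion_transfiniteIterate_subset {F : Set (∀ i, P i) → Set (∀ i, P i)}
    {o : Ordinal.{u}} (ho : Order.IsSuccLimit o) :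
    suppUnion x₀ (transfiniteIterate F o) ⊆ ⋃ o' < o, suppUnion x₀ (transfiniteIterate F o') := by
  intro i hi
  obtain ⟨f, hf, hif⟩ := mem_iUnion₂.1 hi
  obtain ⟨o', ho', hfo'⟩ := exists_lt_of_mem_transfiniteIterate ho hf
  exact mem_iUnion₂.2 ⟨o', ho', supp_subset_suppUnion hfo' hif⟩

theorem mk_suppUnion_le {κ : Cardinal.{u}} (hκ : ℵ₀ ≤ κ) {Y : Set (∀ i, P i)}
    (hY : ∀ f ∈ Y, (supp x₀ f).Countable) (hYκ : #Y ≤ κ) : #(suppUnion x₀ Y) ≤ κ :=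
  calc #(suppUnion x₀ Y) ≤ #Y * ⨆ f : Y, #(supp x₀ f.1) := mk_biUnion_le _ _
    _ ≤ κ * κ := mul_le_mul' hYκ (ciSup_le' fun f => (hY f f.2).le_aleph0.trans hκ)
    _ = κ := mul_eq_self hκ

theorem eq_of_traceOn_eq {S : Set ι} {f g : ∀ i, P i} (h : traceOn x₀ S f = traceOn x₀ S g)
    {i : ι} (hi : i ∈ S) : f i = g i := by
  by_cases hf : f i = x₀ i
  · by_cases hg : g i = x₀ i
    · rw [hf, hg]
    · have hmem : (⟨⟨i, hi⟩, g i⟩ : Σ i : S, P i) ∈ traceOn x₀ S f := h ▸ ⟨rfl, hg⟩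
      exact hmem.1
  · have hmem : (⟨⟨i, hi⟩, f i⟩ : Σ i : S, P i) ∈ traceOn x₀ S g := h ▸ ⟨rfl, hf⟩
    exact hmem.1.symm

theorem traceOn_countable {f : ∀ i, P i} (hf : (supp x₀ f).Countable) (S : Set ι) :
    (traceOn x₀ S f).Countable := by
  refine ((hf.preimage Subtype.val_injective).image
    fun i : S => (⟨i, f i⟩ : Σ i : S, P i)).mono ?_
  rintro ⟨i, v⟩ ⟨hfv, hv⟩
  obtain rfl : f i = v := hfv
  exact ⟨i, hv, rfl⟩

theorem mk_representatives_le {κ : Cardinal.{u}} (hκ : ℵ₀ ≤ κ) (hκ₀ : κ ^ ℵ₀ = κ)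
    (hP : ∀ i, #(P i) ≤ κ) {A : Set (∀ i, P i)} (hA : ∀ f ∈ A, (supp x₀ f).Countable)
    {Y : Set (∀ i, P i)} (hY : #(suppUnion x₀ Y) ≤ κ) : #(representatives x₀ A Y) ≤ κ := by
  have htrace : traceOn x₀ (suppUnion x₀ Y) '' A ⊆ {t | #t ≤ ℵ₀} := by
    rintro - ⟨f, hf, rfl⟩
    exact (traceOn_countable (hA f hf) _).le_aleph0
  calc #(representatives x₀ A Y) ≤ #(traceOn x₀ (suppUnion x₀ Y) '' A) := mk_image_le
    _ ≤ #{t : Set (Σ i : suppUnion x₀ Y, P i) // #t ≤ ℵ₀} := mk_le_mk_of_subset htrace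
    _ ≤ κ := mk_countable_subsets_le hκ hκ₀ (mk_sigma_le hκ hY fun i => hP i)

theorem exists_ne_eq_on_supp_inter_of_lt_mk {κ : Cardinal.{u}} (hκ : ℵ₁ ≤ κ)
    (hκ₀ : κ ^ ℵ₀ = κ) (hP : ∀ i, #(P i) ≤ κ) {A : Set (∀ i, P i)}
    (hA : ∀ f ∈ A, (supp x₀ f).Countable) (hAκ : κ < #A) :
    ∃ f ∈ A, ∃ g ∈ A, f ≠ g ∧ ∀ i ∈ supp x₀ f ∩ supp x₀ g, f i = g i := by
  have hκω : ℵ₀ ≤ κ := aleph0_lt_aleph_one.le.trans hκ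
  set F := representatives x₀ A
  set U := transfiniteIterate F ω₁
  have hFA : ∀ Y, F Y ⊆ A := representatives_subset x₀ A
  have hU : #U ≤ κ := mk_transfiniteIterate_le hκω hFA
    (fun Y hYA hYκ => mk_representatives_le hκω hκ₀ hP hA
      (mk_suppUnion_le hκω (fun f hf => hA f (hYA hf)) hYκ))
    (by rwa [card_omega])
  obtain ⟨g, hgA, hgU⟩ : ∃ g ∈ A, g ∉ U :=
    not_subset.1 fun h => ((mk_le_mk_of_subset h).trans hU).not_gt hAκ
  obtain ⟨o, ho, hgo⟩ : ∃ o < ω₁,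
      supp x₀ g ∩ suppUnion x₀ U ⊆ suppUnion x₀ (transfiniteIterate F o) :=
    exists_lt_omega_one_subset (suppUnion_mono.comp transfiniteIterate_mono)
      ((hA g hgA).mono inter_subset_left)
      (inter_subset_right.trans (suppUnion_transfiniteIterate_subset (isSuccLimit_omega 1)))
  obtain ⟨f, hfF, hfg⟩ := exists_mem_representatives_traceOn_eq x₀ hgA (transfiniteIterate F o)
  have hfU : f ∈ U := apply_transfiniteIterate_subset ho hfF
  exact ⟨f, hFA _ hfF, g, hgA, ne_of_mem_of_not_mem hfU hgU, fun i hi =>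
    eq_of_traceOn_eq hfg (hgo ⟨hi.2, supp_subset_suppUnion hfU hi.1⟩)⟩

end Supports

theorem exists_le_le_of_eq_on_supp_inter {ι : Type u} {P : ι → Type u} [∀ i, Preorder (P i)]
    [∀ i, OrderTop (P i)] {f g : ∀ i, P i} (hfg : ∀ i ∈ supp ⊤ f ∩ supp ⊤ g, f i = g i) :
    ∃ h : ∀ i, P i, supp ⊤ h ⊆ supp ⊤ f ∪ supp ⊤ g ∧ h ≤ f ∧ h ≤ g := by
  classical
  refine ⟨fun i => if f i = ⊤ then g i else f i, fun i hi => ?_, fun i => ?_, fun i => ?_⟩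
  · change (if f i = ⊤ then g i else f i) ≠ ⊤ at hi
    split_ifs at hi with hf
    exacts [Or.inr hi, Or.inl hf]
  · dsimp only
    split_ifs with hf
    exacts [hf ▸ le_top, le_rfl]
  · dsimp only
    split_ifs with hf
    · exact le_rfl
    · by_cases hg : g i = ⊤
      exacts [hg ▸ le_top, (hfg i ⟨hf, hg⟩).le]

end CountableSupport

open CountableSupport

/-- under CH, a countable support product of partial orders of size
at most `ℵ₁` has no antichain of size `ℵ₂`. -/
theorem countable_support_product_aleph2_cc
    (hCH : Cardinal.continuum = Cardinal.aleph 1)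
    (ι : Type) (P : ι → Type) [∀ α, PartialOrder (P α)] [∀ α, OrderTop (P α)]
    (hP : ∀ α, Cardinal.mk (P α) ≤ Cardinal.aleph 1)
    (A : Set {f : ∀ α, P α // {α | f α ≠ ⊤}.Countable})
    (hA : ∀ f ∈ A, ∀ g ∈ A, f ≠ g →
      ¬ ∃ h : {f : ∀ α, P α // {α | f α ≠ ⊤}.Countable},
          (∀ α, h.1 α ≤ f.1 α) ∧ (∀ α, h.1 α ≤ g.1 α)) :
    Cardinal.mk A < Cardinal.aleph 2 := by
  have hCH₀ : (𝔠 : Cardinal.{0}) = ℵ₁ := lift_injective (by simpa using hCH)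
  have hℵ₁ : (ℵ₁ : Cardinal.{0}) ^ ℵ₀ = ℵ₁ := by rw [← hCH₀, continuum_power_aleph0]
  by_contra hA₂
  have hAℵ₁ : ℵ₁ < #(Subtype.val '' A) := by
    rw [mk_image_eq Subtype.val_injective]
    exact (aleph_lt_aleph.2 one_lt_two).trans_le (not_lt.1 hA₂)
  obtain ⟨-, ⟨f, hfA, rfl⟩, -, ⟨g, hgA, rfl⟩, hfg, hagree⟩ :=
    exists_ne_eq_on_supp_inter_of_lt_mk (x₀ := ⊤) le_rfl hℵ₁ hP
      (by rintro - ⟨f, -, rfl⟩; exact f.2) hAℵ₁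
  obtain ⟨h, hsupp, hhf, hhg⟩ := exists_le_le_of_eq_on_supp_inter hagree
  exact hA f hfA g hgA (fun hfg' => hfg (congrArg Subtype.val hfg'))
    ⟨⟨h, (f.2.union g.2).mono hsupp⟩, hhf, hhg⟩
end

section
/- Under CH, the Δ-system lemma for countable sets: any family of ℵ₂-many countable sets contains a subfamily of size ℵ₂ forming a Δ-system (pairwise intersections all equal to a fixed kernel). -/
/-!
Index the family by `ω₂` and embed the union of the sets into `ω₂` as well. For `w` of
cofinality `ω₁` the countable set `A w ∩ w` is bounded below `w`; a closure-point argument (in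
place of Fodor's lemma) yields a single bound `β` that serves `ℵ₂` many `w`. Under CH there are
only `ℵ₁ ^ ℵ₀ = ℵ₁` countable subsets of `β`, so `ℵ₂` many `w` share one root `A w ∩ w = R`.
Choosing `ℵ₂` of them recursively, each above all points of the earlier sets, any two of the
chosen sets meet exactly in `R`.
-/

open Cardinal Order Set

universe u

def IsDeltaSystem {ι α : Type*} (A : ι → Set α) (X : Set ι) : Prop :=
  ∃ K, X.Pairwise fun i j => A i ∩ A j = K

namespace IsDeltaSystem

variable {ι ι' α β : Type*} {A : ι → Set α} {X : Set ι}

theorem image {e : ι' → ι} (he : Function.Injective e) {Y : Set ι'}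
    (h : IsDeltaSystem (A ∘ e) Y) : IsDeltaSystem A (e '' Y) := by
  obtain ⟨K, hK⟩ := h
  exact ⟨K, he.injOn.pairwise_image.2 hK⟩

theorem of_image {f : α → β} (hf : InjOn f (⋃ i, A i))
    (h : IsDeltaSystem (fun i => f '' A i) X) : IsDeltaSystem A X := by
  obtain ⟨K, hK⟩ := h
  refine ⟨(⋃ i, A i) ∩ f ⁻¹' K, fun i hi j hj hne => ?_⟩
  rw [← hK hi hj hne, ← hf.image_inter (subset_iUnion A i) (subset_iUnion A j)]
  ext x
  constructor
  · intro hx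
    exact ⟨mem_iUnion.2 ⟨i, hx.1⟩, mem_image_of_mem f hx⟩
  · rintro ⟨hxU, y, hy, hyx⟩
    rwa [← hf (subset_iUnion A i hy.1) hxU hyx]

end IsDeltaSystem

theorem Cardinal.IsRegular.isRegularCardinalOrder_toType {c : Cardinal} (hc : c.IsRegular) :
    IsRegularCardinalOrder c.ord.ToType :=
  ⟨by simp [Ordinal.cof_toType, hc.cof_ord]⟩

theorem Cardinal.aleph_one_lt_of_forall_pow_aleph0_lt {κ : Cardinal} (hκ : ℵ₀ < κ)
    (h : ∀ μ < κ, μ ^ ℵ₀ < κ) : ℵ₁ < κ :=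
  aleph_one_le_continuum.trans_lt (aleph0_power_aleph0 ▸ h ℵ₀ hκ)

theorem Cardinal.continuum_eq_aleph_one_of_univ.{v, w} (h : (𝔠 : Cardinal.{v}) = ℵ₁) :
    (𝔠 : Cardinal.{w}) = ℵ₁ :=
  lift_inj.{w, v}.1 (by simpa using congrArg lift.{w} h)

theorem Cardinal.pow_aleph0_lt_aleph_two (hCH : (𝔠 : Cardinal.{u}) = ℵ₁) {μ : Cardinal.{u}}
    (hμ : μ < aleph 2) : μ ^ ℵ₀ < aleph 2 := by
  rw [← one_add_one_eq_two, ← succ_aleph, Order.lt_succ_iff] at hμ ⊢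
  calc μ ^ ℵ₀ ≤ ℵ₁ ^ ℵ₀ := power_le_power_right hμ
    _ = ℵ₁ := by rw [← hCH, continuum_power_aleph0]

namespace Order

variable {W : Type u} [LinearOrder W] [WellFoundedLT W] [IsRegularCardinalOrder W]

theorem exists_forall_lt_of_mk_lt {s : Set W} (hs : #s < #W) : ∃ b, ∀ x ∈ s, x < b :=
  not_isCofinal_iff.1 fun h => (cof_le h).not_gt (cof_eq_cardinalMk (α := W) ▸ hs)

theorem mk_Iio_lt_mk (w : W) : #(Iio w) < #W := mk_Iio_lt w ord_cardinalMk

theorem isCofinal_of_mk_le {X : Set W} (hX : #W ≤ #X) : IsCofinal X := by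
  by_contra h
  obtain ⟨b, hb⟩ := not_isCofinal_iff.1 h
  exact (hX.trans (mk_le_mk_of_subset hb)).not_gt (mk_Iio_lt_mk b)

theorem _root_.IsCofinal.exists_seq_map_lt {X : Set W} (hX : IsCofinal X) (g : W → W) {ι : Type u}
    [LinearOrder ι] [WellFoundedLT ι] (hι : ∀ j : ι, #(Iio j) < #W) :
    ∃ t : ι → W, ∀ j, t j ∈ X ∧ ∀ i < j, g (t i) < t j := by
  have step (j : ι) (f : Iio j → W) : ∃ x ∈ X, ∀ i, g (f i) < x := by
    obtain ⟨b, hb⟩ :=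
      exists_forall_lt_of_mk_lt (mk_range_le.trans_lt (hι j) : #(range (g ∘ f)) < _)
    obtain ⟨x, hx, hbx⟩ := hX b
    exact ⟨x, hx, fun i => (hb _ ⟨i, rfl⟩).trans_le hbx⟩
  choose pick hpickX hpick using step
  let t : ι → W := wellFounded_lt.fix fun j ih => pick j fun i => ih i.1 i.2
  have ht (j : ι) : t j = pick j fun i => t i.1 := wellFounded_lt.fix_eq _ j
  exact ⟨t, fun j => ⟨ht j ▸ hpickX _ _, fun i hi => ht j ▸ hpick j (fun i => t i.1) ⟨i, hi⟩⟩⟩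

theorem exists_closure_point_uncountable_cof (h1 : ℵ₁ < #W) (h : W → W) :
    ∃ i : W, (∀ β < i, h β < i) ∧ ∀ Q ⊆ Iio i, Q.Countable → ∃ β < i, ∀ x ∈ Q, x < β := by
  let O := (ℵ₁ : Cardinal.{u}).ord.ToType
  have := isRegular_aleph_one.{u}.isRegularCardinalOrder_toType
  have := Cardinal.noMaxOrder (aleph0_le_aleph.{u} 1)
  have hO : #O = ℵ₁ := mk_ord_toType _
  have hW : ℵ₀ ≤ #W := aleph0_lt_aleph_one.le.trans h1.le
  have hsmall (w : W) : #(insert w (h '' Iio w) : Set W) < #W :=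
    mk_insert_le.trans_lt (add_lt_of_lt hW (mk_image_le.trans_lt (mk_Iio_lt_mk w))
      (one_lt_aleph0.trans_le hW))
  choose g hg using fun w => exists_forall_lt_of_mk_lt (hsmall w)
  obtain ⟨t, ht⟩ := IsCofinal.univ.exists_seq_map_lt g (ι := O)
    fun ζ => (mk_Iio_lt_mk ζ).trans (hO ▸ h1)
  have hmono : StrictMono t := fun ζ η hζη =>
    (hg _ _ (mem_insert _ _)).trans ((ht η).2 ζ hζη)
  obtain ⟨b, hb⟩ := exists_forall_lt_of_mk_lt (mk_range_le.trans_lt (hO ▸ h1) : #(range t) < _)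
  obtain ⟨i, hi, hmin⟩ := wellFounded_lt.has_min {b | ∀ ζ, t ζ < b} ⟨b, fun ζ => hb _ ⟨ζ, rfl⟩⟩
  have hcof (β : W) (hβ : β < i) : ∃ ζ, β < t ζ := by
    obtain ⟨ζ, hζ⟩ : ∃ ζ, β ≤ t ζ := by
      by_contra! hcon
      exact hmin β hcon hβ
    obtain ⟨η, hη⟩ := exists_gt ζ
    exact ⟨η, hζ.trans_lt (hmono hη)⟩
  refine ⟨i, fun β hβ => ?_, fun Q hQ hQc => ?_⟩
  · obtain ⟨ζ, hζ⟩ := hcof β hβ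
    obtain ⟨η, hη⟩ := exists_gt ζ
    exact (hg _ _ (mem_insert_of_mem _ ⟨β, hζ, rfl⟩)).trans ((ht η).2 ζ hη |>.trans (hi η))
  · choose ζ hζ using fun x : Q => hcof x (hQ x.2)
    have := hQc.to_subtype
    obtain ⟨η, hη⟩ := exists_forall_lt_of_mk_lt (mk_range_le.trans_lt
      (hO ▸ mk_le_aleph0.trans_lt aleph0_lt_aleph_one) : #(range ζ) < #O)
    exact ⟨t η, hi η, fun x hx => (hζ ⟨x, hx⟩).trans (hmono (hη _ ⟨_, rfl⟩))⟩

theorem exists_le_mk_setOf_inter_Iio_subset (h1 : ℵ₁ < #W) {A : W → Set W}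
    (hA : ∀ w, (A w).Countable) : ∃ β, #W ≤ #{w | A w ∩ Iio w ⊆ Iio β} := by
  by_contra! hsmall
  choose h hh using fun β => exists_forall_lt_of_mk_lt (hsmall β)
  obtain ⟨i, hclosed, hbdd⟩ := exists_closure_point_uncountable_cof h1 h
  obtain ⟨β, hβi, hβ⟩ := hbdd (A i ∩ Iio i) inter_subset_right ((hA i).mono inter_subset_left)
  exact (hh β i hβ).asymm (hclosed β hβi)

theorem exists_le_mk_setOf_inter_Iio_eq [Uncountable W] (hW : ∀ μ < #W, μ ^ ℵ₀ < #W)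
    {A : W → Set W} (hA : ∀ w, (A w).Countable) : ∃ R, #W ≤ #{w | A w ∩ Iio w = R} := by
  obtain ⟨β, hβ⟩ :=
    exists_le_mk_setOf_inter_Iio_subset (aleph_one_lt_of_forall_pow_aleph0_lt aleph0_lt_mk hW) hA
  let f (w : {w | A w ∩ Iio w ⊆ Iio β}) : {t : Set W // t ⊆ Iio β ∧ #t ≤ ℵ₀} :=
    ⟨A w ∩ Iio w, w.2, ((hA w).mono inter_subset_left).le_aleph0⟩
  have hf : #{t : Set W // t ⊆ Iio β ∧ #t ≤ ℵ₀} < (#W).ord.cof := by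
    rw [ord_cardinalMk, Ordinal.cof_type, cof_eq_cardinalMk]
    exact (mk_bounded_subset_le _ _).trans_lt (hW _ (max_lt (mk_Iio_lt_mk β) aleph0_lt_mk))
  obtain ⟨R, Y, hYsub, hY, hYR⟩ := infinite_pigeonhole_set f #W hβ aleph0_lt_mk.le hf
  exact ⟨R.1, hY.trans (mk_le_mk_of_subset fun w hw => congrArg Subtype.val (hYR hw))⟩

theorem exists_pairwise_inter_eq_of_inter_Iio_eq [Uncountable W] {A : W → Set W}
    (hA : ∀ w, (A w).Countable) {X : Set W} (hX : #W ≤ #X) {R : Set W}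
    (hR : ∀ w ∈ X, A w ∩ Iio w = R) :
    ∃ Y : Set W, #Y = #W ∧ Y.Pairwise fun v w => A v ∩ A w = R := by
  choose g hg using fun w => exists_forall_lt_of_mk_lt
    (((hA w).insert w).le_aleph0.trans_lt aleph0_lt_mk : #(insert w (A w) : Set W) < #W)
  obtain ⟨t, ht⟩ := (isCofinal_of_mk_le hX).exists_seq_map_lt g mk_Iio_lt_mk
  have hmono : StrictMono t := fun v w hvw => (hg _ _ (mem_insert _ _)).trans ((ht w).2 v hvw)
  have key (v w : W) (hvw : v < w) : A (t v) ∩ A (t w) = R := by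
    have hsub : A (t v) ⊆ Iio (t w) := fun x hx =>
      (hg _ _ (mem_insert_of_mem _ hx)).trans ((ht w).2 v hvw)
    have hv := hR _ (ht v).1
    calc A (t v) ∩ A (t w) = A (t v) ∩ (A (t w) ∩ Iio (t w)) := by
          rw [← inter_assoc, inter_right_comm, inter_eq_left.2 hsub]
      _ = A (t v) ∩ R := by rw [hR _ (ht w).1]
      _ = R := inter_eq_right.2 (hv ▸ inter_subset_left)
  refine ⟨range t, mk_range_eq _ hmono.injective, ?_⟩
  rintro _ ⟨v, rfl⟩ _ ⟨w, rfl⟩ hne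
  rcases lt_or_gt_of_ne (ne_of_apply_ne t hne) with hvw | hwv
  · exact key v w hvw
  · rw [inter_comm]
    exact key w v hwv

theorem exists_isDeltaSystem_of_countable_subsets [Uncountable W]
    (hW : ∀ μ < #W, μ ^ ℵ₀ < #W) {A : W → Set W} (hA : ∀ w, (A w).Countable) :
    ∃ Y : Set W, #Y = #W ∧ IsDeltaSystem A Y := by
  obtain ⟨R, hR⟩ := exists_le_mk_setOf_inter_Iio_eq hW hA
  obtain ⟨Y, hY, hYR⟩ := exists_pairwise_inter_eq_of_inter_Iio_eq hA hR fun _ hw => hw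
  exact ⟨Y, hY, R, hYR⟩

theorem exists_isDeltaSystem_of_countable [Uncountable W] (hW : ∀ μ < #W, μ ^ ℵ₀ < #W)
    {ι α : Type u} (hι : #ι = #W) {A : ι → Set α} (hA : ∀ i, (A i).Countable) :
    ∃ X : Set ι, #X = #W ∧ IsDeltaSystem A X := by
  obtain ⟨φ⟩ : Nonempty (W ≃ ι) := Cardinal.eq.1 hι.symm
  have hU : #(⋃ i, A i) ≤ #W := calc
    _ ≤ #ι * ⨆ i, #(A i) := mk_iUnion_le A
    _ ≤ #W * ℵ₀ := by rw [hι]; gcongr; exact ciSup_le' fun i => (hA i).le_aleph0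
    _ = #W := mul_aleph0_eq aleph0_lt_mk.le
  obtain ⟨f, hf⟩ : ∃ f : α → W, InjOn f (⋃ i, A i) :=
    exists_injOn_iff_injective.2 (Cardinal.le_def _ _ |>.1 hU |>.elim fun e => ⟨e, e.injective⟩)
  obtain ⟨Y, hY, hδ⟩ := exists_isDeltaSystem_of_countable_subsets hW
    (A := fun w => f '' A (φ w)) fun w => (hA _).image f
  refine ⟨φ '' Y, by rw [mk_image_eq φ.injective, hY], (hδ.of_image ?_).image φ.injective⟩
  rwa [φ.surjective.iUnion_comp A]

end Order

/-- under CH, any family of `ℵ₂`-many countable sets contains a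
subfamily of size `ℵ₂` forming a Δ-system. -/
theorem delta_system_CH (hCH : Cardinal.continuum = Cardinal.aleph 1)
    (α : Type) (I : Type) (hI : Cardinal.mk I = Cardinal.aleph 2)
    (A : I → Set α) (hA : ∀ i, (A i).Countable) :
    ∃ (X : Set I) (K : Set α), Cardinal.mk X = Cardinal.aleph 2 ∧
      ∀ i ∈ X, ∀ j ∈ X, i ≠ j → A i ∩ A j = K := by
  have hW : #(aleph 2).ord.ToType = aleph 2 := mk_ord_toType _
  have h2 : (aleph 2).IsRegular := by simpa [one_add_one_eq_two] using isRegular_aleph_add_one 1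
  have := h2.isRegularCardinalOrder_toType
  have := aleph0_lt_mk_iff.1 (hW ▸ aleph0_lt_aleph.2 two_pos)
  have hpow : ∀ μ < #(aleph 2).ord.ToType, μ ^ ℵ₀ < #(aleph 2).ord.ToType := by
    rw [hW]
    exact fun μ => pow_aleph0_lt_aleph_two (continuum_eq_aleph_one_of_univ hCH)
  obtain ⟨X, hX, K, hK⟩ := Order.exists_isDeltaSystem_of_countable hpow (hI.trans hW.symm) hA
  exact ⟨X, K, hX.trans hW, fun i hi j hj hne => hK hi hj hne⟩
end

section
/- In the forcing ℙ^∞, if p is a condition with p_j a singleton {t_j^p} for all j < i, and p' is defined by p'_0 = {t_0^p ⌢ t_1^p ⌢ … ⌢ t_{i-1}^p} and p'_{j+1} = p_{j+i} for j ∈ ω, then p' ≤ p, and every condition extending p is compatible with p'; equivalently, p forces (in the forcing-theoretic sense) that p' belongs to the generic filter. -/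
open Set

/-- A condition of `ℙ^∞`: each coordinate is a nonempty finite set of binary
strings of a common positive length, and infinitely many coordinates have
exactly two elements. -/
def PinfCond (p : ℕ → Finset (List Bool)) : Prop :=
  (∀ i, (p i).Nonempty ∧ ∃ k : ℕ, 0 < k ∧ ∀ t ∈ p i, t.length = k) ∧
    {j | (p j).card = 2}.Infinite

/-- The left endpoint of the `i`-th block determined by `J` (with `J₋₁ = -1`). -/
def blockStart (J : ℕ → ℕ) : ℕ → ℕ
  | 0 => 0
  | i + 1 => J i + 1

/-- `t` is a concatenation of choices from `p a, p (a+1), …, p b`. -/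
def IsBlockConcat (p : ℕ → Finset (List Bool)) (a b : ℕ) (t : List Bool) : Prop :=
  ∃ c : ℕ → List Bool, (∀ l, c l ∈ p l) ∧
    t = ((List.range (b + 1 - a)).map fun d => c (a + d)).foldr (· ++ ·) []

/-- The order of `ℙ^∞`: `q ≤ p` iff there are `j₀ < j₁ < …` such that every
element of each block `q i` is a concatenation of choices from `p` over the
corresponding interval of indices. -/
def pinfLe (q p : ℕ → Finset (List Bool)) : Prop :=
  ∃ J : ℕ → ℕ, StrictMono J ∧ ∀ i, ∀ t ∈ q i, IsBlockConcat p (blockStart J i) (J i) t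

/-!
Merging the first `n` coordinates of a condition into the single coordinate of all their
concatenations, and shifting the rest, gives a stronger condition `mergeFirst p n`. Merging is
monotone: if `q ≤ p` via `J`, the first `n` blocks of `q` end at `J (n - 1) ≥ n - 1`, so they
still cover the merged part of `p`, and shifting `J` by `n - 1` witnesses
`mergeFirst q n ≤ mergeFirst p n`. When the first `i` coordinates of `p` are singletons, `p'` is
`mergeFirst p i`, so for every `q ≤ p` the condition `mergeFirst q i` extends both `q` and `p'`.
-/

namespace Pinf

def blockCat (c : ℕ → List Bool) (a n : ℕ) : List Bool :=
  (List.ofFn fun d : Fin n => c (a + d)).flatten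

lemma foldr_map_range_eq_blockCat (c : ℕ → List Bool) (a n : ℕ) :
    ((List.range n).map fun d => c (a + d)).foldr (· ++ ·) [] = blockCat c a n := by
  have foldr_append (L : List (List Bool)) : L.foldr (· ++ ·) [] = L.flatten := by
    induction L <;> simp_all
  rw [foldr_append, blockCat]
  congr 1
  apply List.ext_getElem <;> simp

lemma isBlockConcat_iff {p : ℕ → Finset (List Bool)} {a b : ℕ} {t : List Bool} :
    IsBlockConcat p a b t ↔
      ∃ c : ℕ → List Bool, (∀ l, c l ∈ p l) ∧ t = blockCat c a (b + 1 - a) := by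
  simp only [IsBlockConcat, foldr_map_range_eq_blockCat]

lemma blockCat_add (c : ℕ → List Bool) (a m n : ℕ) :
    blockCat c a (m + n) = blockCat c a m ++ blockCat c (a + m) n := by
  simp [blockCat, List.ofFn_add, Nat.add_assoc]

@[simp]
lemma blockCat_one (c : ℕ → List Bool) (a : ℕ) : blockCat c a 1 = c a := by
  simp [blockCat]

lemma blockCat_congr {c₁ c₂ : ℕ → List Bool} {a b n : ℕ}
    (h : ∀ d < n, c₁ (a + d) = c₂ (b + d)) : blockCat c₁ a n = blockCat c₂ b n := by
  unfold blockCat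
  congr 1
  exact List.ofFn_inj.mpr (funext fun d => h d d.isLt)

variable {p q : ℕ → Finset (List Bool)}

lemma isBlockConcat_blockCat (hp : ∀ l, (p l).Nonempty) {c : ℕ → List Bool} {a b : ℕ}
    (hc : ∀ d < b + 1 - a, c (a + d) ∈ p (a + d)) :
    IsBlockConcat p a b (blockCat c a (b + 1 - a)) := by
  choose f hf using hp
  refine isBlockConcat_iff.mpr
    ⟨fun l => if a ≤ l ∧ l < b + 1 then c l else f l, fun l => ?_,
      blockCat_congr fun d hd => ?_⟩
  · dsimp only
    split_ifs with hl
    · obtain ⟨d, rfl⟩ := Nat.exists_eq_add_of_le hl.1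
      exact hc d (by omega)
    · exact hf l
  · rw [if_pos (by omega)]

lemma isBlockConcat_self (hp : ∀ l, (p l).Nonempty) {a : ℕ} {u : List Bool} (hu : u ∈ p a) :
    IsBlockConcat p a a u := by
  simpa [Nat.add_sub_cancel_left] using
    isBlockConcat_blockCat hp (c := fun _ => u) (a := a) (b := a) (by simpa using hu)

lemma IsBlockConcat.append {a b e : ℕ} {s s' : List Bool} (hab : a ≤ b + 1) (hbe : b ≤ e)
    (h : IsBlockConcat p a b s) (h' : IsBlockConcat p (b + 1) e s') :
    IsBlockConcat p a e (s ++ s') := by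
  obtain ⟨c, hc, rfl⟩ := isBlockConcat_iff.mp h
  obtain ⟨c', hc', rfl⟩ := isBlockConcat_iff.mp h'
  refine isBlockConcat_iff.mpr ⟨fun l => if l ≤ b then c l else c' l, fun l => ?_, ?_⟩
  · dsimp only
    split_ifs
    exacts [hc l, hc' l]
  · rw [show e + 1 - a = (b + 1 - a) + (e + 1 - (b + 1)) by omega, blockCat_add,
      show a + (b + 1 - a) = b + 1 by omega]
    congr 1 <;> refine blockCat_congr fun d hd => ?_
    · rw [if_pos (by omega)]
    · rw [if_neg (by omega)]

lemma isBlockConcat_blockCat_of_blocks {J : ℕ → ℕ} (hJ : StrictMono J) {c : ℕ → List Bool}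
    {k : ℕ} (h : ∀ l ≤ k, IsBlockConcat p (blockStart J l) (J l) (c l)) :
    IsBlockConcat p 0 (J k) (blockCat c 0 (k + 1)) := by
  induction k with
  | zero => simpa [blockStart] using h 0 le_rfl
  | succ k ih =>
    rw [blockCat_add, blockCat_one, zero_add]
    exact IsBlockConcat.append (by omega) (hJ k.lt_succ_self).le (ih fun l hl => h l (by omega))
      (h (k + 1) le_rfl)

def mergeFirst (p : ℕ → Finset (List Bool)) (n : ℕ) : ℕ → Finset (List Bool)
  | 0 => (Fintype.piFinset fun d : Fin n => p d).image fun f => (List.ofFn f).flatten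
  | j + 1 => p (j + n)

lemma mem_mergeFirst_zero {n : ℕ} {t : List Bool} :
    t ∈ mergeFirst p n 0 ↔
      ∃ c : ℕ → List Bool, (∀ l < n, c l ∈ p l) ∧ t = blockCat c 0 n := by
  simp only [mergeFirst, Finset.mem_image, Fintype.mem_piFinset]
  constructor
  · rintro ⟨f, hf, rfl⟩
    refine ⟨fun l => if h : l < n then f ⟨l, h⟩ else [],
      fun l hl => by simpa [hl] using hf ⟨l, hl⟩, ?_⟩
    simp [blockCat]
  · rintro ⟨c, hc, rfl⟩
    exact ⟨fun d => c d, fun d => hc d d.isLt, by simp [blockCat]⟩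

lemma mergeFirst_zero_eq_singleton {n : ℕ} {t : ℕ → List Bool} (ht : ∀ j < n, p j = {t j}) :
    mergeFirst p n 0 = {blockCat t 0 n} := by
  ext s
  rw [mem_mergeFirst_zero, Finset.mem_singleton]
  constructor
  · rintro ⟨c, hc, rfl⟩
    exact blockCat_congr fun d hd => by simpa [ht d hd] using hc d hd
  · rintro rfl
    exact ⟨t, fun l hl => by simp [ht l hl], rfl⟩

lemma pinfCond_mergeFirst (hp : PinfCond p) {n : ℕ} (hn : 0 < n) : PinfCond (mergeFirst p n) := by
  obtain ⟨hp, hpair⟩ := hp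
  choose hne k hk hlen using hp
  refine ⟨fun j => ?_, ?_⟩
  · cases j with
    | zero =>
      refine ⟨(Fintype.piFinset_nonempty.mpr fun d : Fin n => hne d).image _, ∑ d : Fin n, k d,
        Finset.sum_pos (fun d _ => hk d) ⟨⟨0, hn⟩, Finset.mem_univ _⟩, ?_⟩
      simp only [mergeFirst, Finset.mem_image, Fintype.mem_piFinset]
      rintro _ ⟨f, hf, rfl⟩
      simp [List.length_flatten, List.sum_ofFn, fun d => hlen _ _ (hf d)]
    | succ j => exact ⟨hne _, k _, hk _, hlen _⟩
  · refine Set.infinite_of_forall_exists_gt fun a => ?_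
    obtain ⟨b, hb, hab⟩ := hpair.exists_gt (a + n)
    refine ⟨b - n + 1, ?_, by omega⟩
    show (p (b - n + n)).card = 2
    rwa [Nat.sub_add_cancel (by omega)]

lemma pinfLe_mergeFirst (hp : ∀ l, (p l).Nonempty) {n : ℕ} (hn : 0 < n) :
    pinfLe (mergeFirst p n) p := by
  refine ⟨fun m => m + n - 1, fun a b hab => by dsimp only; omega, ?_⟩
  rintro (_ | j) t ht
  · obtain ⟨c, hc, rfl⟩ := mem_mergeFirst_zero.mp ht
    simpa [blockStart, Nat.sub_add_cancel hn] using
      isBlockConcat_blockCat hp (a := 0) (b := n - 1) fun d hd => by simpa using hc d (by omega)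
  · show IsBlockConcat p (j + n - 1 + 1) (j + 1 + n - 1) t
    rw [show j + n - 1 + 1 = j + n by omega, show j + 1 + n - 1 = j + n by omega]
    exact isBlockConcat_self hp ht

def mergeChoice (c : ℕ → List Bool) (n : ℕ) : ℕ → List Bool
  | 0 => blockCat c 0 n
  | l + 1 => c (l + n)

lemma mergeChoice_mem {c : ℕ → List Bool} (hc : ∀ l, c l ∈ p l) (n l : ℕ) :
    mergeChoice c n l ∈ mergeFirst p n l := by
  cases l with
  | zero => exact mem_mergeFirst_zero.mpr ⟨c, fun l _ => hc l, rfl⟩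
  | succ l => exact hc (l + n)

lemma blockCat_mergeChoice_succ (c : ℕ → List Bool) (n a m : ℕ) :
    blockCat (mergeChoice c n) (a + 1) m = blockCat c (a + n) m :=
  blockCat_congr fun d _ => by
    rw [show a + 1 + d = (a + d) + 1 by omega, mergeChoice, Nat.add_right_comm]

lemma blockCat_mergeChoice_zero (c : ℕ → List Bool) (n m : ℕ) :
    blockCat (mergeChoice c n) 0 (m + 1) = blockCat c 0 (n + m) := by
  rw [Nat.add_comm m 1, blockCat_add, blockCat_one, blockCat_mergeChoice_succ, blockCat_add]
  rfl

lemma IsBlockConcat.mergeFirst_zero {n b : ℕ} {u : List Bool} (h : IsBlockConcat p 0 (b + n) u) :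
    IsBlockConcat (mergeFirst p (n + 1)) 0 b u := by
  obtain ⟨c, hc, rfl⟩ := isBlockConcat_iff.mp h
  refine isBlockConcat_iff.mpr ⟨mergeChoice c (n + 1), mergeChoice_mem hc (n + 1), ?_⟩
  rw [Nat.sub_zero, Nat.sub_zero, blockCat_mergeChoice_zero]
  congr 1
  omega

lemma IsBlockConcat.mergeFirst_succ {n a b : ℕ} {u : List Bool}
    (h : IsBlockConcat p (a + n + 1) (b + n) u) :
    IsBlockConcat (mergeFirst p (n + 1)) (a + 1) b u := by
  obtain ⟨c, hc, rfl⟩ := isBlockConcat_iff.mp h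
  refine isBlockConcat_iff.mpr ⟨mergeChoice c (n + 1), mergeChoice_mem hc (n + 1), ?_⟩
  rw [blockCat_mergeChoice_succ, Nat.add_assoc]
  congr 1
  omega

lemma pinfLe_mergeFirst_mergeFirst (hqp : pinfLe q p) {n : ℕ} (hn : 0 < n) :
    pinfLe (mergeFirst q n) (mergeFirst p n) := by
  obtain ⟨k, rfl⟩ := Nat.exists_eq_add_one_of_ne_zero hn.ne'
  obtain ⟨J, hJ, hq⟩ := hqp
  obtain ⟨J', hJ'⟩ : ∃ J' : ℕ → ℕ, ∀ m, J (m + k) = J' m + k :=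
    ⟨fun m => J (m + k) - k, fun m => by
      have : m + k ≤ J (m + k) := hJ.le_apply
      dsimp only
      omega⟩
  refine ⟨J', fun a b hab => ?_, ?_⟩
  · have := hJ (Nat.add_lt_add_right hab k)
    rw [hJ', hJ'] at this
    omega
  rintro (_ | m) u hu
  · obtain ⟨c, hc, rfl⟩ := mem_mergeFirst_zero.mp hu
    have hcat := isBlockConcat_blockCat_of_blocks hJ (k := k) fun l hl =>
      hq l (c l) (hc l (by omega))
    rw [show J k = J' 0 + k by simpa using hJ' 0] at hcat
    exact IsBlockConcat.mergeFirst_zero hcat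
  · have hblock := hq (m + k + 1) u (by rwa [Nat.add_assoc])
    rw [blockStart, hJ' m, show m + k + 1 = m + 1 + k by omega, hJ' (m + 1)] at hblock
    exact IsBlockConcat.mergeFirst_succ hblock

end Pinf

open Pinf in
/-- if `p ∈ ℙ^∞` has singleton coordinates `{t_j}` for `j < i`, and
`p'` is obtained by merging these into the single first block
`{t₀ ⌢ t₁ ⌢ … ⌢ t_{i-1}}` and shifting, then `p' ≤ p` and every condition
extending `p` is compatible with `p'` (i.e. `p ⊩ p' ∈ G`). -/
theorem pinf_merge_forces_generic (p p' : ℕ → Finset (List Bool)) (hp : PinfCond p)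
    (i : ℕ) (hi : 0 < i) (t : ℕ → List Bool) (ht : ∀ j, j < i → p j = {t j})
    (hp'0 : p' 0 = {((List.range i).map t).foldr (· ++ ·) []})
    (hp's : ∀ j, p' (j + 1) = p (j + i)) :
    PinfCond p' ∧ pinfLe p' p ∧
      ∀ q : ℕ → Finset (List Bool), PinfCond q → pinfLe q p →
        ∃ r : ℕ → Finset (List Bool), PinfCond r ∧ pinfLe r q ∧ pinfLe r p' := by
  have hp' : p' = mergeFirst p i := by
    funext j
    cases j with
    | zero =>
      rw [hp'0, mergeFirst_zero_eq_singleton ht, ← foldr_map_range_eq_blockCat]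
      simp
    | succ j => exact hp's j
  subst hp'
  exact ⟨pinfCond_mergeFirst hp hi, pinfLe_mergeFirst (fun l => (hp.1 l).1) hi,
    fun q hq hqp => ⟨mergeFirst q i, pinfCond_mergeFirst hq hi,
      pinfLe_mergeFirst (fun l => (hq.1 l).1) hi, pinfLe_mergeFirst_mergeFirst hqp hi⟩⟩
end

section
/- If T ⊆ 2^{<ω} is a tree and [T] is G₁-independent (no two branches differ in exactly one coordinate) and t ∈ T is such that both t⌢⟨0⟩ and t⌢⟨1⟩ have extensions to branches of T, then there exists k ∈ ω such that the level-k successor sets {u ∈ 2^k : t⌢⟨0⟩⌢u ∈ T, extendible to a branch} and {u ∈ 2^k : t⌢⟨1⟩⌢u ∈ T, extendible to a branch} are disjoint. -/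
open Set

/-- A tree: a set of finite binary sequences closed under initial segments. -/
def IsTree (T : Set (List Bool)) : Prop := ∀ t ∈ T, ∀ s : List Bool, s <+: t → s ∈ T

/-- The initial segment of length `n` of `x : 2^ω` as a finite sequence. -/
def initSeg (x : ℕ → Bool) (n : ℕ) : List Bool := (List.range n).map x

/-- `x` is an infinite branch of `T`. -/
def IsBranch (T : Set (List Bool)) (x : ℕ → Bool) : Prop := ∀ n, initSeg x n ∈ T

/-- `[T]` is `G₁`-independent: no two branches differ in exactly one coordinate. -/
def BranchesG1Indep (T : Set (List Bool)) : Prop :=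
  ∀ x y : ℕ → Bool, IsBranch T x → IsBranch T y → ¬ ∃! n : ℕ, x n ≠ y n

/-- `s` is extendible to a branch of `T`. -/
def Extendible (T : Set (List Bool)) (s : List Bool) : Prop :=
  ∃ x : ℕ → Bool, IsBranch T x ∧ initSeg x s.length = s

/-! If the extendible successors of `t⌢⟨0⟩` and `t⌢⟨1⟩` met at every level, the common
extendible successors would form a binary tree with nodes at every level, hence (König's
lemma, i.e. compactness of `2^ω`) with a branch `z`. Then `t⌢⟨0⟩⌢z` and `t⌢⟨1⟩⌢z` are branches
of `T` differing exactly at coordinate `|t|`. -/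

lemma initSeg_length (x : ℕ → Bool) (n : ℕ) : (initSeg x n).length = n := by
  simp [initSeg]

lemma initSeg_eq_ofFn (x : ℕ → Bool) (n : ℕ) :
    initSeg x n = List.ofFn fun i : Fin n => x i := by
  apply List.ext_getElem <;> simp [initSeg]

lemma initSeg_prefix (x : ℕ → Bool) {m n : ℕ} (h : m ≤ n) : initSeg x m <+: initSeg x n := by
  rw [List.prefix_iff_eq_take]
  simp [initSeg, ← List.map_take, List.take_range, h]

lemma isClosed_setOf_initSeg_mem (S : Set (List Bool)) (n : ℕ) :
    IsClosed {x : ℕ → Bool | initSeg x n ∈ S} := by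
  simp_rw [initSeg_eq_ofFn]
  exact (isClosed_discrete {f : Fin n → Bool | List.ofFn f ∈ S}).preimage
    (f := fun (x : ℕ → Bool) (i : Fin n) => x i) (by fun_prop)

lemma IsTree.exists_isBranch {S : Set (List Bool)} (hS : IsTree S)
    (hlevel : ∀ n, ∃ u ∈ S, u.length = n) : ∃ z, IsBranch S z := by
  have hnonempty : ∀ n, {x : ℕ → Bool | initSeg x n ∈ S}.Nonempty := by
    intro n
    obtain ⟨u, hu, rfl⟩ := hlevel n
    refine ⟨fun i => u.getD i false, ?_⟩
    show initSeg _ _ ∈ S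
    convert hu
    apply List.ext_getElem <;> simp +contextual [initSeg]
  obtain ⟨z, hz⟩ := IsCompact.nonempty_iInter_of_sequence_nonempty_isCompact_isClosed
    (fun n => {x : ℕ → Bool | initSeg x n ∈ S})
    (fun n x hx => hS _ hx _ (initSeg_prefix x n.le_succ)) hnonempty
    (isClosed_setOf_initSeg_mem S 0).isCompact (isClosed_setOf_initSeg_mem S)
  exact ⟨z, Set.mem_iInter.mp hz⟩

lemma IsTree.inter {S T : Set (List Bool)} (hS : IsTree S) (hT : IsTree T) : IsTree (S ∩ T) :=
  fun u hu v hv => ⟨hS u hu.1 v hv, hT u hu.2 v hv⟩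

lemma IsTree.above {T : Set (List Bool)} (hT : IsTree T) (s : List Bool) :
    IsTree {u | s ++ u ∈ T} :=
  fun _ hu _ hv => hT _ hu _ ((List.prefix_append_right_inj s).mpr hv)

lemma Extendible.mem {T : Set (List Bool)} {s : List Bool} (hs : Extendible T s) : s ∈ T := by
  obtain ⟨x, hx, hxs⟩ := hs
  exact hxs ▸ hx _

lemma isTree_setOf_extendible (T : Set (List Bool)) : IsTree {s | Extendible T s} := by
  rintro s ⟨x, hx, hxs⟩ p hp
  have hxp : initSeg x p.length <+: s := hxs ▸ initSeg_prefix x hp.length_le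
  exact ⟨x, hx, (List.prefix_of_prefix_length_le hxp hp (by rw [initSeg_length])).eq_of_length
    (initSeg_length x _)⟩

def prepend (s : List Bool) (z : ℕ → Bool) (n : ℕ) : Bool :=
  if h : n < s.length then s[n] else z (n - s.length)

lemma initSeg_prepend (s : List Bool) (z : ℕ → Bool) (m : ℕ) :
    initSeg (prepend s z) (s.length + m) = s ++ initSeg z m := by
  apply List.ext_getElem
  · simp [initSeg]
  · intro i _ _
    simp [initSeg, prepend, List.getElem_append]

lemma isBranch_prepend {T : Set (List Bool)} (hT : IsTree T) {s : List Bool} {z : ℕ → Bool}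
    (h : ∀ n, s ++ initSeg z n ∈ T) : IsBranch T (prepend s z) := fun n =>
  hT _ (initSeg_prepend s z n ▸ h n) _ (initSeg_prefix _ (Nat.le_add_left n _))

lemma prepend_append_singleton_ne_iff (t : List Bool) {a b : Bool} (z : ℕ → Bool) (n : ℕ) :
    prepend (t ++ [a]) z n ≠ prepend (t ++ [b]) z n ↔ n = t.length ∧ a ≠ b := by
  rcases lt_trichotomy n t.length with h | rfl | h
  · simp [prepend, h, h.ne, Nat.lt_succ_of_lt h]
  · simp [prepend]
  · simp [prepend, h.ne', Nat.not_lt.mpr (Nat.succ_le_of_lt h)]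

theorem G1_tree_successors_disjoint_general (T : Set (List Bool))
    (hind : BranchesG1Indep T) (t : List Bool) :
    ∃ k : ℕ,
      Disjoint
        {u : List Bool | u.length = k ∧ t ++ [false] ++ u ∈ T ∧
          Extendible T (t ++ [false] ++ u)}
        {u : List Bool | u.length = k ∧ t ++ [true] ++ u ∈ T ∧
          Extendible T (t ++ [true] ++ u)} := by
  by_contra! hmeet
  set E := {s | Extendible T s}
  have hcommon : ∀ k, ∃ u ∈ {u | t ++ [false] ++ u ∈ E} ∩ {u | t ++ [true] ++ u ∈ E},
      u.length = k := by
    intro k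
    obtain ⟨u, ⟨hk, -, hu₀⟩, -, -, hu₁⟩ := Set.not_disjoint_iff.mp (hmeet k)
    exact ⟨u, ⟨hu₀, hu₁⟩, hk⟩
  have hE : IsTree E := isTree_setOf_extendible T
  obtain ⟨z, hz⟩ := ((hE.above _).inter (hE.above _)).exists_isBranch hcommon
  have hbranch (b : Bool) (hb : ∀ n, t ++ [b] ++ initSeg z n ∈ E) :
      IsBranch T (prepend (t ++ [b]) z) :=
    fun n => Extendible.mem (isBranch_prepend hE hb n)
  refine hind _ _ (hbranch false fun n => (hz n).1) (hbranch true fun n => (hz n).2)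
    ⟨t.length, ?_, fun n hn => ?_⟩
  · simp [prepend_append_singleton_ne_iff]
  · exact ((prepend_append_singleton_ne_iff t z n).mp hn).1

/-- if `[T]` is `G₁`-independent and both `t⌢⟨0⟩` and `t⌢⟨1⟩` are
extendible to branches, then for some `k` the extendible level-`k` successor sets
above `t⌢⟨0⟩` and `t⌢⟨1⟩` are disjoint. -/
theorem G1_tree_successors_disjoint (T : Set (List Bool)) (hT : IsTree T)
    (hind : BranchesG1Indep T) (t : List Bool) (htT : t ∈ T)
    (h0 : Extendible T (t ++ [false])) (h1 : Extendible T (t ++ [true])) :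
    ∃ k : ℕ,
      Disjoint
        {u : List Bool | u.length = k ∧ t ++ [false] ++ u ∈ T ∧
          Extendible T (t ++ [false] ++ u)}
        {u : List Bool | u.length = k ∧ t ++ [true] ++ u ∈ T ∧
          Extendible T (t ++ [true] ++ u)} :=
  G1_tree_successors_disjoint_general T hind t
end
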